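/- arXiv:2510.22756 — 5 statements merged into one kernel-verified Lean document; each statement's English description precedes it below -/
import Mathlib

section
/- Let n ≥ 1 and let w : B₁ → ℝ be C² on the open unit ball B₁ ⊆ ℝⁿ. Suppose S ⊆ B₁ is a set which is discrete in its subspace topology (every point of S is isolated in S), and suppose that for every x ∈ B₁ \ S and every nonzero v ∈ ℝⁿ one has D²w(x)[v, v] < |v|², i.e. the largest eigenvalue of the Hessian of w is strictly less than 1 off S. Then the map x ↦ x − Dw(x) is injective on B₁; equivalently, the submanifold obtained by rotating the gradient graph {(x, Dw(x)) : x ∈ B₁} ⊆ ℝⁿ × ℝⁿ upward by the angle π/4, parametrized by x ↦ ((x − Dw(x))/√2, (x + Dw(x))/√2), is again a graph over the first ℝⁿ factor. -/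
/-! If `a - ∇w a = b - ∇w b` with `a ≠ b`, put `v = b - a`. The function `t ↦ Dw(a + t v) v`
has derivative `D²w(a + t v)[v, v]`, which is `< ‖v‖²` except at the countably many `t` with
`a + t v ∈ S` (a discrete subset of a second-countable space is countable). Integrating over
`[0, 1]` gives `⟪∇w b - ∇w a, v⟫ < ‖v‖²`, whereas `∇w b - ∇w a = v`. -/

open Metric Set MeasureTheory
open scoped RealInnerProductSpace

theorem sub_lt_mul_sub_of_hasDerivAt_of_ae_lt {f f' : ℝ → ℝ} {a b c : ℝ} (hab : a < b)
    (hf : ∀ t ∈ Icc a b, HasDerivAt f (f' t) t) (hf' : ContinuousOn f' (Icc a b))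
    (hlt : ∀ᵐ t ∂volume.restrict (Ioc a b), f' t < c) :
    f b - f a < c * (b - a) := by
  have hint : IntervalIntegrable f' volume a b := hf'.intervalIntegrable_of_Icc hab.le
  have hfull : volume.restrict (Ioc a b) {t | f' t < c} ≠ 0 := by
    rw [measure_congr (ae_eq_univ.mpr hlt), Measure.restrict_apply_univ, Real.volume_Ioc]
    simpa using hab
  calc f b - f a = ∫ t in a..b, f' t :=
        (intervalIntegral.integral_eq_sub_of_hasDerivAt (by rwa [uIcc_of_le hab.le]) hint).symm
    _ < ∫ _ in a..b, c :=
        intervalIntegral.integral_lt_integral_of_ae_le_of_measure_setOfPred_lt_ne_zero hab.le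
          hint intervalIntegrable_const (hlt.mono fun _ h => h.le) hfull
    _ = c * (b - a) := by rw [intervalIntegral.integral_const, smul_eq_mul, mul_comm]

section Segment

variable {E F : Type*} [NormedAddCommGroup E] [NormedSpace ℝ E] [NormedAddCommGroup F]
  [NormedSpace ℝ F]

theorem hasDerivAt_fderiv_add_smul_apply {f : E → F} {a v : E} {t : ℝ}
    (h : DifferentiableAt ℝ (fderiv ℝ f) (a + t • v)) :
    HasDerivAt (fun s : ℝ => fderiv ℝ f (a + s • v) v)
      (fderiv ℝ (fderiv ℝ f) (a + t • v) v v) t := by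
  have hline : HasDerivAt (fun s : ℝ => a + s • v) v t := by
    simpa using ((hasDerivAt_id t).smul_const v).const_add a
  have hdf : HasDerivAt (fun s : ℝ => fderiv ℝ f (a + s • v))
      (fderiv ℝ (fderiv ℝ f) (a + t • v) v) t :=
    h.hasFDerivAt.comp_hasDerivAt t hline
  simpa using hdf.clm_apply (hasDerivAt_const t v)

end Segment

section Gradient

variable {E : Type*} [NormedAddCommGroup E] [InnerProductSpace ℝ E] [CompleteSpace E]

theorem fderiv_apply_eq_inner_gradient (f : E → ℝ) (x v : E) :
    fderiv ℝ f x v = ⟪gradient f x, v⟫ := by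
  rw [← toDual_gradient, InnerProductSpace.toDual_apply_apply]

theorem inner_gradient_sub_lt_norm_sq_of_hessian_lt {w : E → ℝ} {U S : Set E} (hU : IsOpen U)
    (hUc : Convex ℝ U) (hw : ContDiffOn ℝ 2 w U) (hS : S.Countable)
    (hHess : ∀ x ∈ U \ S, ∀ v : E, v ≠ 0 → iteratedFDeriv ℝ 2 w x ![v, v] < ‖v‖ ^ 2)
    {a b : E} (ha : a ∈ U) (hb : b ∈ U) (hab : a ≠ b) :
    ⟪gradient w b - gradient w a, b - a⟫ < ‖b - a‖ ^ 2 := by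
  set v := b - a
  have hv : v ≠ 0 := sub_ne_zero.mpr hab.symm
  have hseg : ∀ t ∈ Icc (0 : ℝ) 1, a + t • v ∈ U := fun _ ht =>
    hUc.add_smul_sub_mem ha hb ht
  have hD2 : ContinuousOn (fderiv ℝ (fderiv ℝ w)) U :=
    (hw.fderiv_of_isOpen (m := 1) hU (by norm_num)).continuousOn_fderiv_of_isOpen hU le_rfl
  have hderiv : ∀ t ∈ Icc (0 : ℝ) 1, HasDerivAt (fun s : ℝ => fderiv ℝ w (a + s • v) v)
      (fderiv ℝ (fderiv ℝ w) (a + t • v) v v) t := fun t ht =>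
    hasDerivAt_fderiv_add_smul_apply <|
      ((hw.contDiffAt (hU.mem_nhds (hseg t ht))).fderiv_right (m := 1) (by norm_num))
        |>.differentiableAt one_ne_zero
  have hcont :
      ContinuousOn (fun t : ℝ => fderiv ℝ (fderiv ℝ w) (a + t • v) v v) (Icc 0 1) :=
    ((hD2.comp (by fun_prop) hseg).clm_apply continuousOn_const).clm_apply continuousOn_const
  have hlt : ∀ᵐ t ∂volume.restrict (Ioc (0 : ℝ) 1),
      fderiv ℝ (fderiv ℝ w) (a + t • v) v v < ‖v‖ ^ 2 := by
    have hinj : Function.Injective fun t : ℝ => a + t • v :=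
      (add_right_injective a).comp (smul_left_injective ℝ hv)
    filter_upwards [ae_restrict_of_ae ((hS.preimage hinj).ae_notMem volume),
      ae_restrict_mem measurableSet_Ioc] with t htS ht
    simpa [iteratedFDeriv_two_apply] using hHess _ ⟨hseg t (Ioc_subset_Icc_self ht), htS⟩ v hv
  have := sub_lt_mul_sub_of_hasDerivAt_of_ae_lt zero_lt_one hderiv hcont hlt
  simp only [zero_smul, add_zero, one_smul, mul_one, sub_zero, v, add_sub_cancel] at this
  rwa [fderiv_apply_eq_inner_gradient, fderiv_apply_eq_inner_gradient, ← inner_sub_left]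
    at this

theorem Convex.injOn_id_sub_gradient_of_hessian_lt_one {w : E → ℝ} {U S : Set E}
    (hUc : Convex ℝ U) (hU : IsOpen U) (hw : ContDiffOn ℝ 2 w U) (hS : S.Countable)
    (hHess : ∀ x ∈ U \ S, ∀ v : E, v ≠ 0 →
      iteratedFDeriv ℝ 2 w x ![v, v] < ‖v‖ ^ 2) :
    InjOn (fun x => x - gradient w x) U := by
  intro a ha b hb hab
  by_contra hne
  have hgrad : gradient w b - gradient w a = b - a := by
    linear_combination (norm := module) hab
  have := inner_gradient_sub_lt_norm_sq_of_hessian_lt hU hUc hw hS hHess ha hb hne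
  rw [hgrad, real_inner_self_eq_norm_sq] at this
  exact this.false

end Gradient

/-- If `w` is `C²` on the unit ball and its Hessian satisfies `D²w(x)[v,v] < |v|²` for all
nonzero `v`, away from a discrete set `S`, then `x ↦ x - Dw(x)` is injective on the ball;
i.e., the gradient graph of `w` rotated upward by `π/4` is again a graph. -/
theorem injOn_id_sub_gradient_of_hessian_lt_one
    (n : ℕ)
    (w : EuclideanSpace ℝ (Fin n) → ℝ)
    (hw : ContDiffOn ℝ 2 w (Metric.ball 0 1))
    (S : Set (EuclideanSpace ℝ (Fin n)))
    (hSdisc : DiscreteTopology S)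
    (hHess : ∀ x ∈ Metric.ball (0 : EuclideanSpace ℝ (Fin n)) 1 \ S,
      ∀ v : EuclideanSpace ℝ (Fin n), v ≠ 0 →
        iteratedFDeriv ℝ 2 w x ![v, v] < ‖v‖ ^ 2) :
    Set.InjOn (fun x => x - gradient w x) (Metric.ball 0 1) :=
  (convex_ball 0 1).injOn_id_sub_gradient_of_hessian_lt_one isOpen_ball hw
    ((HereditarilyLindelofSpace.isLindelof S).countable hSdisc) hHess
end

section
/- Let n ≥ 2 be an integer and let q > 0 and k > 0 be real numbers. The double integral ∫₀¹ ∫₀¹ r^{n−2} / (r^{2k} + s²)^{q} dr ds is finite if and only if q < 1/2 + (n−1)/(2k). -/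
/-!
Write `a = n - 2`. If `s ≤ r^k` then `r^{2k} + s² ≤ 2 r^{2k}`, so on this region, whose
`s`-sections have length `r^k`, the integrand is at least `2^{-q} r^{a-2kq}`; finiteness forces
`∫₀¹ r^{a-2kq+k} dr < ∞`, i.e. `q < 1/2 + (a+1)/(2k)`. Conversely, splitting `q = (q - β) + β` gives
`(r^{2k} + s²)^q ≥ r^{2k(q-β)} s^{2β}`, so the integrand is dominated by the product
`r^{a-2k(q-β)} s^{-2β}`, which is integrable as soon as `β < 1/2` and `2k(q-β) < a+1`; such a
`β ∈ [0, q]` exists exactly when `q < 1/2 + (a+1)/(2k)`.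
-/

open Set MeasureTheory Real

noncomputable def modelIntegrand (a k q : ℝ) (p : ℝ × ℝ) : ℝ :=
  p.1 ^ a / (p.1 ^ (2 * k) + p.2 ^ 2) ^ q

lemma Real.rpow_mul_rpow_le_add_rpow_add {x y α β : ℝ} (hx : 0 < x) (hy : 0 ≤ y)
    (hα : 0 ≤ α) (hβ : 0 ≤ β) : x ^ α * y ^ β ≤ (x + y) ^ (α + β) := by
  rw [rpow_add (by positivity)]
  exact mul_le_mul (rpow_le_rpow hx.le (le_add_of_nonneg_right hy) hα)
    (rpow_le_rpow hy (le_add_of_nonneg_left hx.le) hβ) (by positivity) (by positivity)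

lemma integrableOn_rpow_mul_rpow_Ioo_prod_Ioo {a b : ℝ} (ha : -1 < a) (hb : -1 < b) :
    IntegrableOn (fun p : ℝ × ℝ => p.1 ^ a * p.2 ^ b) (Ioo 0 1 ×ˢ Ioo 0 1) := by
  rw [IntegrableOn, Measure.volume_eq_prod, ← Measure.prod_restrict]
  exact ((intervalIntegral.integrableOn_Ioo_rpow_iff one_pos).2 ha).mul_prod
    ((intervalIntegral.integrableOn_Ioo_rpow_iff one_pos).2 hb)

namespace modelIntegrand

variable {a k q : ℝ}

@[fun_prop]
lemma measurable : Measurable (modelIntegrand a k q) := by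
  unfold modelIntegrand
  fun_prop

lemma nonneg {r : ℝ} (hr : 0 < r) (s : ℝ) : 0 ≤ modelIntegrand a k q (r, s) := by
  unfold modelIntegrand
  positivity

lemma le_rpow_mul_rpow {r s β : ℝ} (hr : 0 < r) (hs : 0 < s) (hβ₀ : 0 ≤ β) (hβq : β ≤ q) :
    modelIntegrand a k q (r, s) ≤ r ^ (a - 2 * k * (q - β)) * s ^ (-(2 * β)) := by
  have hsplit : (r ^ (2 * k)) ^ (q - β) * (s ^ 2) ^ β ≤ (r ^ (2 * k) + s ^ 2) ^ q := by
    simpa using rpow_mul_rpow_le_add_rpow_add (by positivity) (sq_nonneg s) (sub_nonneg.2 hβq) hβ₀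
  calc modelIntegrand a k q (r, s)
      ≤ r ^ a / ((r ^ (2 * k)) ^ (q - β) * (s ^ 2) ^ β) :=
        div_le_div_of_nonneg_left (by positivity) (by positivity) hsplit
    _ = r ^ (a - 2 * k * (q - β)) * s ^ (-(2 * β)) := by
        rw [← rpow_natCast, ← rpow_mul hr.le, ← rpow_mul hs.le, rpow_sub hr, rpow_neg hs.le]
        push_cast
        ring

lemma rpow_sub_le {r s : ℝ} (hr : 0 < r) (hs₀ : 0 ≤ s) (hs : s ≤ r ^ k) (hq : 0 ≤ q) :
    r ^ (a - 2 * k * q) ≤ 2 ^ q * modelIntegrand a k q (r, s) := by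
  have hsq : s ^ 2 ≤ r ^ (2 * k) := by
    rw [mul_comm, rpow_mul hr.le, rpow_two]
    exact pow_le_pow_left₀ hs₀ hs 2
  have hbound : (r ^ (2 * k) + s ^ 2) ^ q ≤ 2 ^ q * r ^ (2 * k * q) := by
    rw [rpow_mul hr.le (2 * k) q, ← mul_rpow zero_le_two (by positivity)]
    exact rpow_le_rpow (by positivity) (by linarith) hq
  rw [modelIntegrand, rpow_sub hr, mul_div, le_div_iff₀ (by positivity), div_mul_eq_mul_div,
    div_le_iff₀ (by positivity)]
  calc r ^ a * (r ^ (2 * k) + s ^ 2) ^ q ≤ r ^ a * (2 ^ q * r ^ (2 * k * q)) := by gcongr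
    _ = 2 ^ q * r ^ a * r ^ (2 * k * q) := by ring

theorem integrableOn_of_lt (ha : -1 < a) (hq : 0 < q) (hk : 0 < k)
    (h : q < 1 / 2 + (a + 1) / (2 * k)) :
    IntegrableOn (modelIntegrand a k q) (Ioo 0 1 ×ˢ Ioo 0 1) := by
  have hc : 0 < (a + 1) / (2 * k) := by
    apply div_pos <;> linarith
  obtain ⟨β, hβl, hβu⟩ := exists_between
    (show max 0 (q - (a + 1) / (2 * k)) < min q (1 / 2) by
      simp only [max_lt_iff, lt_min_iff]
      refine ⟨⟨?_, ?_⟩, ?_, ?_⟩ <;> linarith)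
  rw [max_lt_iff] at hβl
  rw [lt_min_iff] at hβu
  have hr : -1 < a - 2 * k * (q - β) := by
    have := (lt_div_iff₀ (by positivity : 0 < 2 * k)).1 (by linarith : q - β < (a + 1) / (2 * k))
    linarith
  refine (integrableOn_rpow_mul_rpow_Ioo_prod_Ioo hr (by linarith : -1 < -(2 * β))).mono'
    measurable.aestronglyMeasurable ?_
  filter_upwards [ae_restrict_mem (measurableSet_Ioo.prod measurableSet_Ioo)]
    with ⟨r, s⟩ ⟨⟨hr₀, _⟩, ⟨hs₀, _⟩⟩
  rw [norm_of_nonneg (nonneg hr₀ s)]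
  exact le_rpow_mul_rpow hr₀ hs₀ hβl.1.le hβu.1.le

theorem lt_of_integrableOn (hq : 0 ≤ q) (hk : 0 < k)
    (h : IntegrableOn (modelIntegrand a k q) (Ioo 0 1 ×ˢ Ioo 0 1)) :
    q < 1 / 2 + (a + 1) / (2 * k) := by
  set E : Set (ℝ × ℝ) := {p | p.2 ∈ Ioo 0 (p.1 ^ k)}
  have hE : MeasurableSet E :=
    (measurableSet_lt measurable_const measurable_snd).inter
      (measurableSet_lt measurable_snd (by fun_prop))
  have hg : IntegrableOn (E.indicator fun p => p.1 ^ (a - 2 * k * q)) (Ioo 0 1 ×ˢ Ioo 0 1) := by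
    refine (h.const_mul (2 ^ q)).mono'
      ((Measurable.indicator (by fun_prop) hE).aestronglyMeasurable) ?_
    filter_upwards [ae_restrict_mem (measurableSet_Ioo.prod measurableSet_Ioo)]
      with ⟨r, s⟩ ⟨⟨hr₀, _⟩, _⟩
    by_cases hp : (r, s) ∈ E
    · rw [indicator_of_mem hp, norm_of_nonneg (by positivity)]
      exact rpow_sub_le hr₀ hp.1.le hp.2.le hq
    · rw [indicator_of_notMem hp, norm_zero]
      exact mul_nonneg (by positivity) (nonneg hr₀ s)
  rw [IntegrableOn, Measure.volume_eq_prod, ← Measure.prod_restrict] at hg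
  have hsection :
      EqOn (fun r => ∫ s in Ioo 0 1, E.indicator (fun p => p.1 ^ (a - 2 * k * q)) (r, s))
        (fun r => r ^ (a - 2 * k * q + k)) (Ioo 0 1) := by
    rintro r ⟨hr₀, hr₁⟩
    have hrk : r ^ k ≤ 1 := (rpow_lt_one hr₀.le hr₁ hk).le
    calc ∫ s in Ioo 0 1, E.indicator (fun p => p.1 ^ (a - 2 * k * q)) (r, s)
        = ∫ s in Ioo 0 1, (Ioo 0 (r ^ k)).indicator (fun _ => r ^ (a - 2 * k * q)) s := rfl
      _ = ∫ s in Ioo 0 (r ^ k), r ^ (a - 2 * k * q) := by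
        rw [setIntegral_indicator measurableSet_Ioo,
          inter_eq_right.2 (Ioo_subset_Ioo_right hrk)]
      _ = r ^ (a - 2 * k * q + k) := by
        rw [setIntegral_const, volume_real_Ioo_of_le (by positivity), smul_eq_mul,
          rpow_add hr₀]
        ring
  have hexp := (intervalIntegral.integrableOn_Ioo_rpow_iff one_pos).1
    (IntegrableOn.congr_fun hg.integral_prod_left hsection measurableSet_Ioo)
  rw [div_add_div _ _ two_ne_zero (by positivity : 2 * k ≠ 0), lt_div_iff₀ (by positivity)]
  linarith

theorem integrableOn_iff (ha : -1 < a) (hq : 0 < q) (hk : 0 < k) :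
    IntegrableOn (modelIntegrand a k q) (Ioo 0 1 ×ˢ Ioo 0 1) ↔ q < 1 / 2 + (a + 1) / (2 * k) :=
  ⟨lt_of_integrableOn hq.le hk, integrableOn_of_lt ha hq hk⟩

end modelIntegrand

/-- The double integral `∫₀¹∫₀¹ r^{n-2}/(r^{2k} + s²)^q dr ds` is finite if and only if
`q < 1/2 + (n-1)/(2k)`. -/
theorem integrable_model_integral_iff
    (n : ℕ) (hn : 2 ≤ n) (q k : ℝ) (hq : 0 < q) (hk : 0 < k) :
    MeasureTheory.IntegrableOn
        (fun p : ℝ × ℝ => p.1 ^ (n - 2) / (p.1 ^ (2 * k) + p.2 ^ 2) ^ q)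
        (Set.Ioo (0 : ℝ) 1 ×ˢ Set.Ioo (0 : ℝ) 1) ↔
      q < 1 / 2 + ((n : ℝ) - 1) / (2 * k) := by
  have hcast : ((n - 2 : ℕ) : ℝ) = (n : ℝ) - 2 := by rw [Nat.cast_sub hn, Nat.cast_ofNat]
  have hfun : (fun p : ℝ × ℝ => p.1 ^ (n - 2) / (p.1 ^ (2 * k) + p.2 ^ 2) ^ q)
      = modelIntegrand ((n : ℝ) - 2) k q := by
    funext p
    rw [modelIntegrand, ← hcast, rpow_natCast]
  have ha : -1 < (n : ℝ) - 2 := by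
    rw [← hcast]
    linarith [(n - 2).cast_nonneg (α := ℝ)]
  rw [hfun, modelIntegrand.integrableOn_iff ha hq hk, show (n : ℝ) - 2 + 1 = n - 1 by ring]
end

section
/- Let n ≥ 1, let Ω ⊆ ℝⁿ be open, let u : Ω → ℝ be C² on Ω, and let γ ∈ ℝ. Define ū : Ω → ℝ by ū(x) = u(x) − sin γ cos γ · (|Du(x)|² − |x|²)/2 − sin²γ · ⟨x, Du(x)⟩. Then ū is differentiable on Ω and for every x ∈ Ω its gradient is given by Dū(x) = (cos γ · Iₙ − sin γ · D²u(x)) (sin γ · x + cos γ · Du(x)), where D²u(x) is the Hessian of u at x acting as a symmetric linear map on ℝⁿ and Iₙ is the identity. Equivalently, the 1-form Σᵢ ȳᵢ dx̄ᵢ pulled back to Ω via x̄(x) = cos γ · x − sin γ · Du(x), ȳ(x) = sin γ · x + cos γ · Du(x) equals dū. -/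
/-!
Differentiate `ū` term by term. The product rule gives the derivative of each inner product
`⟪φ z, ψ z⟫` through the adjoints of `Dφ` and `Dψ`; for `φ, ψ ∈ {id, Du}` these adjoints are
the identity and the Hessian `D²u(x)`, which is self-adjoint by Schwarz's theorem. The terms
then collect into the claimed gradient using `cos² γ + sin² γ = 1`.
-/

open InnerProductSpace
open scoped RealInnerProductSpace InnerProduct

variable {E : Type*} [NormedAddCommGroup E] [InnerProductSpace ℝ E] [CompleteSpace E]
  {f g : E → ℝ} {f' g' x : E}

theorem HasGradientAt.sub (hf : HasGradientAt f f' x) (hg : HasGradientAt g g' x) :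
    HasGradientAt (fun z => f z - g z) (f' - g') x := by
  rw [hasGradientAt_iff_hasFDerivAt, map_sub]
  exact hf.hasFDerivAt.sub hg.hasFDerivAt

theorem HasGradientAt.const_mul (c : ℝ) (hf : HasGradientAt f f' x) :
    HasGradientAt (fun z => c * f z) (c • f') x := by
  rw [hasGradientAt_iff_hasFDerivAt, map_smul]
  exact hf.hasFDerivAt.const_mul c

theorem HasFDerivAt.hasGradientAt_inner {F : Type*} [NormedAddCommGroup F]
    [InnerProductSpace ℝ F] [CompleteSpace F] {φ ψ : E → F} {φ' ψ' : E →L[ℝ] F}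
    (hφ : HasFDerivAt φ φ' x) (hψ : HasFDerivAt ψ ψ' x) :
    HasGradientAt (fun z => ⟪φ z, ψ z⟫) ((φ'†) (ψ x) + (ψ'†) (φ x)) x := by
  rw [hasGradientAt_iff_hasFDerivAt]
  refine (hφ.inner ℝ hψ).congr_fderiv (ContinuousLinearMap.ext fun v => ?_)
  simp only [ContinuousLinearMap.comp_apply, ContinuousLinearMap.prod_apply, fderivInnerCLM_apply,
    toDual_apply_apply, inner_add_left, ContinuousLinearMap.adjoint_inner_left]
  rw [real_inner_comm (φ' v), add_comm]

theorem inner_fderiv_gradient_apply (u : E → ℝ) (v w : E) :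
    ⟪fderiv ℝ (gradient u) x v, w⟫ = fderiv ℝ (fderiv ℝ u) x v w := by
  have : gradient u = (toDual ℝ E).symm ∘ fderiv ℝ u := rfl
  rw [this, LinearIsometryEquiv.comp_fderiv]
  exact toDual_symm_apply

theorem ContDiffAt.isSelfAdjoint_fderiv_gradient {u : E → ℝ} (hu : ContDiffAt ℝ 2 u x) :
    IsSelfAdjoint (fderiv ℝ (gradient u) x) := by
  refine LinearMap.IsSymmetric.isSelfAdjoint fun v w => ?_
  simp only [ContinuousLinearMap.coe_coe]
  rw [real_inner_comm (fderiv ℝ (gradient u) x w), inner_fderiv_gradient_apply,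
    inner_fderiv_gradient_apply, hu.isSymmSndFDerivAt (by simp) w v]

theorem ContDiffAt.differentiableAt_gradient {u : E → ℝ} (hu : ContDiffAt ℝ 2 u x) :
    DifferentiableAt ℝ (gradient u) x :=
  (toDual ℝ E).symm.differentiableAt.comp x
    ((hu.fderiv_right le_rfl).differentiableAt one_ne_zero)

theorem rotated_potential_gradient_general
    (n : ℕ)
    (Ω : Set (EuclideanSpace ℝ (Fin n))) (hΩ : IsOpen Ω)
    (u : EuclideanSpace ℝ (Fin n) → ℝ) (hu : ContDiffOn ℝ 2 u Ω) (γ : ℝ) :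
    ∀ x ∈ Ω,
      HasGradientAt
        (fun z => u z - Real.sin γ * Real.cos γ * ((‖gradient u z‖ ^ 2 - ‖z‖ ^ 2) / 2)
          - Real.sin γ ^ 2 * ⟪z, gradient u z⟫)
        (Real.cos γ • (Real.sin γ • x + Real.cos γ • gradient u x)
          - Real.sin γ • fderiv ℝ (gradient u) x (Real.sin γ • x + Real.cos γ • gradient u x))
        x := by
  intro x hx
  have hux : ContDiffAt ℝ 2 u x := hu.contDiffAt (hΩ.mem_nhds hx)
  set H := fderiv ℝ (gradient u) x
  have hDu : HasFDerivAt (gradient u) H x := hux.differentiableAt_gradient.hasFDerivAt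
  have hH : H† = H := hux.isSelfAdjoint_fderiv_gradient.adjoint_eq
  have hId := hasFDerivAt_id (𝕜 := ℝ) x
  have hgrad := ((hux.differentiableAt two_ne_zero).hasGradientAt.sub
    (((hDu.hasGradientAt_inner hDu).sub (hId.hasGradientAt_inner hId)).const_mul
      (Real.sin γ * Real.cos γ / 2))).sub
    ((hId.hasGradientAt_inner hDu).const_mul (Real.sin γ ^ 2))
  convert hgrad using 1
  · funext z
    simp only [real_inner_self_eq_norm_sq, id]
    ring
  · simp only [hH, ContinuousLinearMap.adjoint_id, map_add, map_smul,
      ContinuousLinearMap.id_apply, id_eq]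
    linear_combination (norm := module) (Real.sin_sq_add_cos_sq γ) • gradient u x

/-- For `u` of class `C²` on an open set `Ω ⊆ ℝⁿ` and an angle `γ`, the function
`ū(x) = u(x) - sin γ cos γ (|Du(x)|² - |x|²)/2 - sin²γ ⟨x, Du(x)⟩`
has gradient `Dū(x) = (cos γ Iₙ - sin γ D²u(x))(sin γ x + cos γ Du(x))` at every `x ∈ Ω`;
i.e. the 1-form `Σ ȳᵢ dx̄ᵢ` of the rotated coordinates pulls back to `dū`. -/
theorem rotated_potential_gradient
    (n : ℕ) (hn : 1 ≤ n)
    (Ω : Set (EuclideanSpace ℝ (Fin n))) (hΩ : IsOpen Ω)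
    (u : EuclideanSpace ℝ (Fin n) → ℝ) (hu : ContDiffOn ℝ 2 u Ω) (γ : ℝ) :
    ∀ x ∈ Ω,
      HasGradientAt
        (fun z => u z - Real.sin γ * Real.cos γ * ((‖gradient u z‖ ^ 2 - ‖z‖ ^ 2) / 2)
          - Real.sin γ ^ 2 * ⟪z, gradient u z⟫)
        (Real.cos γ • (Real.sin γ • x + Real.cos γ • gradient u x)
          - Real.sin γ • fderiv ℝ (gradient u) x (Real.sin γ • x + Real.cos γ • gradient u x))
        x :=
  rotated_potential_gradient_general n Ω hΩ u hu γ
end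

section
/- Let n ≥ 1, R > 0, K > 0, and let u : B_R → ℝ be differentiable on the open ball B_R ⊆ ℝⁿ with Du K-Lipschitz on B_R. Let γ ∈ (0, π/2) satisfy K·tan γ < 1. Then for all x₁, x₂ ∈ B_R, |sin γ · (x₁ − x₂) + cos γ · (Du(x₁) − Du(x₂))| ≤ ((sin γ + K)/(cos γ − K sin γ)) · |cos γ · (x₁ − x₂) − sin γ · (Du(x₁) − Du(x₂))|. That is, writing x̄(x) = cos γ · x − sin γ · Du(x) and ȳ(x) = sin γ · x + cos γ · Du(x), the map x̄ ↦ ȳ is Lipschitz with constant (sin γ + K)/(cos γ − K sin γ). -/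
open Real

/-! Write `a = x₁ - x₂` and `b = Du x₁ - Du x₂`, so that `‖b‖ ≤ K ‖a‖`. The triangle inequality
bounds `‖sin γ • a + cos γ • b‖` above by `(sin γ + K) ‖a‖`, and its reverse bounds
`‖cos γ • a - sin γ • b‖` below by `(cos γ - K sin γ) ‖a‖`, which is positive since `K tan γ < 1`. -/

section RotatedDifferences

variable {E : Type*} [SeminormedAddCommGroup E] [NormedSpace ℝ E] {a b : E} {s c K : ℝ}

theorem norm_smul_add_smul_le_of_norm_le (hs : 0 ≤ s) (hc₀ : 0 ≤ c) (hc₁ : c ≤ 1)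
    (hb : ‖b‖ ≤ K * ‖a‖) : ‖s • a + c • b‖ ≤ (s + K) * ‖a‖ :=
  calc ‖s • a + c • b‖ ≤ s * ‖a‖ + c * ‖b‖ := by
        simpa only [norm_smul, Real.norm_of_nonneg hs, Real.norm_of_nonneg hc₀]
          using norm_add_le (s • a) (c • b)
    _ ≤ s * ‖a‖ + 1 * (K * ‖a‖) := by gcongr
    _ = (s + K) * ‖a‖ := by ring

theorem sub_mul_norm_le_norm_smul_sub_smul_of_norm_le (hs : 0 ≤ s) (hb : ‖b‖ ≤ K * ‖a‖) :
    (c - K * s) * ‖a‖ ≤ ‖c • a - s • b‖ :=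
  calc (c - K * s) * ‖a‖ ≤ |c| * ‖a‖ - s * ‖b‖ := by
        nlinarith [le_abs_self c, norm_nonneg a, mul_le_mul_of_nonneg_left hb hs]
    _ = ‖c • a‖ - ‖s • b‖ := by rw [norm_smul, norm_smul, Real.norm_eq_abs, Real.norm_of_nonneg hs]
    _ ≤ ‖c • a - s • b‖ := norm_sub_norm_le _ _

theorem norm_smul_add_smul_le_div_mul_norm_smul_sub_smul (hs : 0 ≤ s) (hc₀ : 0 ≤ c)
    (hc₁ : c ≤ 1) (hK : 0 ≤ K) (hKsc : K * s < c) (hb : ‖b‖ ≤ K * ‖a‖) :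
    ‖s • a + c • b‖ ≤ (s + K) / (c - K * s) * ‖c • a - s • b‖ := by
  have hden : 0 < c - K * s := sub_pos.mpr hKsc
  calc ‖s • a + c • b‖ ≤ (s + K) * ‖a‖ := norm_smul_add_smul_le_of_norm_le hs hc₀ hc₁ hb
    _ = (s + K) / (c - K * s) * ((c - K * s) * ‖a‖) := by
        rw [← mul_assoc, div_mul_cancel₀ _ hden.ne']
    _ ≤ (s + K) / (c - K * s) * ‖c • a - s • b‖ := by
        gcongr
        exact sub_mul_norm_le_norm_smul_sub_smul_of_norm_le hs hb

end RotatedDifferences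

theorem mul_sin_lt_cos_of_mul_tan_lt_one {γ K : ℝ} (hγ₀ : -(π / 2) < γ) (hγ₁ : γ < π / 2)
    (hγK : K * tan γ < 1) : K * sin γ < cos γ := by
  have hcos : 0 < cos γ := cos_pos_of_mem_Ioo ⟨hγ₀, hγ₁⟩
  rwa [tan_eq_sin_div_cos, ← mul_div_assoc, div_lt_one hcos] at hγK

theorem upward_rotation_lipschitz_bound_general
    (n : ℕ) (R K : ℝ) (hK : 0 < K)
    (Du : EuclideanSpace ℝ (Fin n) → EuclideanSpace ℝ (Fin n))
    (hLip : ∀ x₁ ∈ Metric.ball (0 : EuclideanSpace ℝ (Fin n)) R,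
      ∀ x₂ ∈ Metric.ball (0 : EuclideanSpace ℝ (Fin n)) R,
        ‖Du x₁ - Du x₂‖ ≤ K * ‖x₁ - x₂‖)
    (γ : ℝ) (hγ0 : 0 < γ) (hγ1 : γ < π / 2) (hγK : K * Real.tan γ < 1) :
    ∀ x₁ ∈ Metric.ball (0 : EuclideanSpace ℝ (Fin n)) R,
      ∀ x₂ ∈ Metric.ball (0 : EuclideanSpace ℝ (Fin n)) R,
        ‖Real.sin γ • (x₁ - x₂) + Real.cos γ • (Du x₁ - Du x₂)‖ ≤
          ((Real.sin γ + K) / (Real.cos γ - K * Real.sin γ)) *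
            ‖Real.cos γ • (x₁ - x₂) - Real.sin γ • (Du x₁ - Du x₂)‖ := by
  intro x₁ hx₁ x₂ hx₂
  have hπ : 0 < π / 2 := by positivity
  have hsin : 0 ≤ sin γ := sin_nonneg_of_nonneg_of_le_pi hγ0.le (by linarith)
  have hcos : 0 ≤ cos γ := cos_nonneg_of_mem_Icc ⟨by linarith, hγ1.le⟩
  exact norm_smul_add_smul_le_div_mul_norm_smul_sub_smul hsin hcos (cos_le_one γ) hK.le
    (mul_sin_lt_cos_of_mul_tan_lt_one (by linarith) hγ1 hγK) (hLip x₁ hx₁ x₂ hx₂)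

/-- If `Du` is the gradient of `u` on `B_R` and is `K`-Lipschitz there, and `γ ∈ (0, π/2)`
satisfies `K tan γ < 1`, then with `x̄(x) = cos γ x - sin γ Du(x)` and
`ȳ(x) = sin γ x + cos γ Du(x)`, the map `x̄ ↦ ȳ` is Lipschitz with constant
`(sin γ + K)/(cos γ - K sin γ)`. -/
theorem upward_rotation_lipschitz_bound
    (n : ℕ) (hn : 1 ≤ n) (R K : ℝ) (hR : 0 < R) (hK : 0 < K)
    (u : EuclideanSpace ℝ (Fin n) → ℝ)
    (Du : EuclideanSpace ℝ (Fin n) → EuclideanSpace ℝ (Fin n))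
    (hdiff : ∀ x ∈ Metric.ball (0 : EuclideanSpace ℝ (Fin n)) R, HasGradientAt u (Du x) x)
    (hLip : ∀ x₁ ∈ Metric.ball (0 : EuclideanSpace ℝ (Fin n)) R,
      ∀ x₂ ∈ Metric.ball (0 : EuclideanSpace ℝ (Fin n)) R,
        ‖Du x₁ - Du x₂‖ ≤ K * ‖x₁ - x₂‖)
    (γ : ℝ) (hγ0 : 0 < γ) (hγ1 : γ < π / 2) (hγK : K * Real.tan γ < 1) :
    ∀ x₁ ∈ Metric.ball (0 : EuclideanSpace ℝ (Fin n)) R,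
      ∀ x₂ ∈ Metric.ball (0 : EuclideanSpace ℝ (Fin n)) R,
        ‖Real.sin γ • (x₁ - x₂) + Real.cos γ • (Du x₁ - Du x₂)‖ ≤
          ((Real.sin γ + K) / (Real.cos γ - K * Real.sin γ)) *
            ‖Real.cos γ • (x₁ - x₂) - Real.sin γ • (Du x₁ - Du x₂)‖ :=
  upward_rotation_lipschitz_bound_general n R K hK Du hLip γ hγ0 hγ1 hγK
end

section
/- Let n ≥ 1, R > 0, K > 0, and let u : B_R → ℝ be differentiable on the open ball B_R ⊆ ℝⁿ with Du K-Lipschitz on B_R (so u is C^{1,1}). Let γ ∈ (0, π/2) satisfy K·tan γ < 1, and set Φ(x) = cos γ · x − sin γ · Du(x). Then: (i) Φ is injective on B_R and its image Ω̄ = Φ(B_R) is open in ℝⁿ; (ii) the function ū : Ω̄ → ℝ defined by ū(Φ(x)) = u(x) − sin γ cos γ · (|Du(x)|² − |x|²)/2 − sin²γ · ⟨x, Du(x)⟩ is differentiable on Ω̄ with Dū(Φ(x)) = sin γ · x + cos γ · Du(x) for every x ∈ B_R; and (iii) Dū is Lipschitz on Ω̄ with Lipschitz constant at most (sin γ + K)/(cos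 γ − K sin γ). In other words, the Lagrangian submanifold L_u = {(x, Du(x)) : x ∈ B_R}, after the upward rotation by angle γ, is the gradient graph {(x̄, Dū(x̄)) : x̄ ∈ Ω̄} of a potential ū whose gradient is Lipschitz. -/
/-!
Since `Du` is `K`-Lipschitz, `Φ = cos γ • id - sin γ • Du` differs from the invertible linear map
`cos γ • id` by a map of Lipschitz constant `K sin γ < cos γ`. Hence `Φ` is bi-Lipschitz onto its
image, with inverse of Lipschitz constant `1 / (cos γ - K sin γ)`, and the image is open by the
inverse function theorem for maps approximating a linear equivalence. For the potential
`ū = G ∘ Φ⁻¹`, where `G` is the rotated potential, a direct computation using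
`sin² γ + cos² γ = 1` gives
`G x - G x₀ - ⟪ȳ x₀, Φ x - Φ x₀⟫ = (u x - u x₀ - ⟪Du x₀, x - x₀⟫) + O(‖x - x₀‖²)`,
and composing with the Lipschitz inverse turns this into differentiability of `ū` at `Φ x₀`.
-/

open Metric Set Real Asymptotics Filter Function
open scoped RealInnerProductSpace NNReal Topology

theorem isBigO_invFunOn_sub {E F : Type*} [NormedAddCommGroup E] [NormedAddCommGroup F]
    [Nonempty E] {f : E → F} {U : Set E} {a : ℝ} {x₀ : E} (ha : 0 < a)
    (hf : ∀ x₁ ∈ U, ∀ x₂ ∈ U, a * ‖x₁ - x₂‖ ≤ ‖f x₁ - f x₂‖) (hx₀ : x₀ ∈ U)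
    (hU : f '' U ∈ 𝓝 (f x₀)) :
    (fun y => invFunOn f U y - x₀) =O[𝓝 (f x₀)] fun y => y - f x₀ := by
  refine isBigO_iff.2 ⟨a⁻¹, ?_⟩
  filter_upwards [hU] with y hy
  have hlow := hf _ (invFunOn_mem hy) x₀ hx₀
  rw [invFunOn_eq hy] at hlow
  rw [inv_mul_eq_div, le_div_iff₀ ha, mul_comm]
  exact hlow

theorem hasGradientAt_comp_of_isLittleO {E F : Type*} [NormedAddCommGroup E] [NormedSpace ℝ E]
    [NormedAddCommGroup F] [InnerProductSpace ℝ F] [CompleteSpace F] {Φ : E → F} {Ψ : F → E}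
    {g : E → ℝ} {x₀ : E} {p : F}
    (hg : (fun x => g x - g x₀ - ⟪p, Φ x - Φ x₀⟫) =o[𝓝 x₀] fun x => x - x₀)
    (hΨ : (fun y => Ψ y - x₀) =O[𝓝 (Φ x₀)] fun y => y - Φ x₀) (hΨx₀ : Ψ (Φ x₀) = x₀)
    (hΦΨ : ∀ᶠ y in 𝓝 (Φ x₀), Φ (Ψ y) = y) :
    HasGradientAt (g ∘ Ψ) p (Φ x₀) := by
  have hlim : Tendsto Ψ (𝓝 (Φ x₀)) (𝓝 x₀) :=
    tendsto_sub_nhds_zero_iff.1 (hΨ.trans_tendsto (tendsto_sub_nhds_zero_iff.2 tendsto_id))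
  rw [hasGradientAt_iff_isLittleO]
  refine ((hg.comp_tendsto hlim).trans_isBigO hΨ).congr' ?_ EventuallyEq.rfl
  filter_upwards [hΦΨ] with y hy
  simp only [comp_apply, hy, hΨx₀]

theorem LipschitzOnWith.isBigO_norm_sq_sub_inner {E : Type*} [NormedAddCommGroup E]
    [InnerProductSpace ℝ E] {Du : E → E} {K : ℝ≥0} {U : Set E} {x₀ : E}
    (hDu : LipschitzOnWith K Du U) (hU : U ∈ 𝓝 x₀) (a b : ℝ) :
    (fun x => a * (‖x - x₀‖ ^ 2 - ‖Du x - Du x₀‖ ^ 2) - b * ⟪x - x₀, Du x - Du x₀⟫)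
      =O[𝓝 x₀] fun x => ‖x - x₀‖ ^ 2 := by
  have hD : (fun x => Du x - Du x₀) =O[𝓝 x₀] fun x => x - x₀ :=
    isBigO_iff.2 ⟨K, by
      filter_upwards [hU] with x hx using hDu.norm_sub_le hx (mem_of_mem_nhds hU)⟩
  have hsq : (fun x => ‖Du x - Du x₀‖ ^ 2) =O[𝓝 x₀] fun x => ‖x - x₀‖ ^ 2 :=
    hD.norm_norm.pow 2
  have hinner : (fun x => ⟪x - x₀, Du x - Du x₀⟫) =O[𝓝 x₀] fun x => ‖x - x₀‖ ^ 2 := by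
    refine (isBigO_of_le _ fun x => ?_).trans
      (((isBigO_refl (fun x => ‖x - x₀‖) _).mul hD.norm_norm).congr_right fun x => (sq _).symm)
    rw [norm_mul, norm_norm, norm_norm]
    exact norm_inner_le_norm _ _
  exact (((isBigO_refl _ _).sub hsq).const_mul_left a).sub (hinner.const_mul_left b)

section Rotation

variable {E : Type*} [NormedAddCommGroup E] [InnerProductSpace ℝ E]

/-- With `s = sin γ` and `c = cos γ`, `rotatedBase` and `rotatedGradient` are the rotated
coordinates `x̄` and `ȳ` of `(x, Du x)`, and `rotatedPotential` is `ū ∘ Φ`. -/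
def rotatedBase (s c : ℝ) (Du : E → E) (x : E) : E := c • x - s • Du x

def rotatedGradient (s c : ℝ) (Du : E → E) (x : E) : E := s • x + c • Du x

noncomputable def rotatedPotential (s c : ℝ) (u : E → ℝ) (Du : E → E) (x : E) : ℝ :=
  u x - s * c * ((‖Du x‖ ^ 2 - ‖x‖ ^ 2) / 2) - s ^ 2 * ⟪x, Du x⟫

variable {s c : ℝ} {K : ℝ≥0} {U : Set E} {u : E → ℝ} {Du : E → E} {x₀ x₁ x₂ : E}

theorem rotatedBase_sub (x₁ x₂ : E) :
    rotatedBase s c Du x₁ - rotatedBase s c Du x₂ = c • (x₁ - x₂) - s • (Du x₁ - Du x₂) := by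
  simp only [rotatedBase, smul_sub]; abel

theorem rotatedGradient_sub (x₁ x₂ : E) :
    rotatedGradient s c Du x₁ - rotatedGradient s c Du x₂
      = s • (x₁ - x₂) + c • (Du x₁ - Du x₂) := by
  simp only [rotatedGradient, smul_sub]; abel

theorem mul_norm_sub_le_norm_rotatedBase_sub (hs : 0 ≤ s) (hDu : LipschitzOnWith K Du U)
    (hx₁ : x₁ ∈ U) (hx₂ : x₂ ∈ U) :
    (c - K * s) * ‖x₁ - x₂‖ ≤ ‖rotatedBase s c Du x₁ - rotatedBase s c Du x₂‖ := by
  have hLip : s * ‖Du x₁ - Du x₂‖ ≤ s * (K * ‖x₁ - x₂‖) :=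
    mul_le_mul_of_nonneg_left (hDu.norm_sub_le hx₁ hx₂) hs
  calc (c - K * s) * ‖x₁ - x₂‖ ≤ |c| * ‖x₁ - x₂‖ - s * ‖Du x₁ - Du x₂‖ := by
        nlinarith [le_abs_self c, norm_nonneg (x₁ - x₂)]
    _ = ‖c • (x₁ - x₂)‖ - ‖s • (Du x₁ - Du x₂)‖ := by
        rw [norm_smul, norm_smul, Real.norm_eq_abs, Real.norm_of_nonneg hs]
    _ ≤ ‖rotatedBase s c Du x₁ - rotatedBase s c Du x₂‖ := by
        rw [rotatedBase_sub]; exact norm_sub_norm_le _ _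

theorem injOn_rotatedBase (hs : 0 ≤ s) (hKs : K * s < c) (hDu : LipschitzOnWith K Du U) :
    InjOn (rotatedBase s c Du) U := by
  intro x₁ hx₁ x₂ hx₂ heq
  have hlow := mul_norm_sub_le_norm_rotatedBase_sub (c := c) hs hDu hx₁ hx₂
  rw [heq, sub_self, norm_zero] at hlow
  exact sub_eq_zero.1 (norm_le_zero_iff.1 (nonpos_of_mul_nonpos_right hlow (sub_pos.2 hKs)))

theorem approximatesLinearOn_rotatedBase (hDu : LipschitzOnWith K Du U) :
    ApproximatesLinearOn (rotatedBase s c Du) (c • ContinuousLinearMap.id ℝ E) U (‖s‖₊ * K) := by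
  intro x₁ hx₁ x₂ hx₂
  have hlin : rotatedBase s c Du x₁ - rotatedBase s c Du x₂
      - (c • ContinuousLinearMap.id ℝ E) (x₁ - x₂) = -(s • (Du x₁ - Du x₂)) := by
    rw [rotatedBase_sub, smul_apply, ContinuousLinearMap.id_apply]; abel
  rw [hlin, norm_neg, norm_smul, NNReal.coe_mul, coe_nnnorm, mul_assoc]
  exact mul_le_mul_of_nonneg_left (hDu.norm_sub_le hx₁ hx₂) (norm_nonneg s)

theorem isOpen_image_rotatedBase [CompleteSpace E] (hs : 0 ≤ s) (hKs : K * s < c)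
    (hDu : LipschitzOnWith K Du U) (hU : IsOpen U) : IsOpen (rotatedBase s c Du '' U) := by
  have hc : 0 < c := lt_of_le_of_lt (by positivity) hKs
  let inv : (c • ContinuousLinearMap.id ℝ E).NonlinearRightInverse :=
    { toFun := fun y => c⁻¹ • y
      nnnorm := ‖c⁻¹‖₊
      bound' := fun y => (norm_smul _ _).le
      right_inv' := fun y => smul_inv_smul₀ hc.ne' y }
  refine (approximatesLinearOn_rotatedBase hDu).open_image inv hU (Or.inr ?_)
  show ‖s‖₊ * K < ‖c⁻¹‖₊⁻¹
  rw [nnnorm_inv, inv_inv, ← NNReal.coe_lt_coe, NNReal.coe_mul, coe_nnnorm, coe_nnnorm,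
    Real.norm_of_nonneg hs, Real.norm_of_nonneg hc.le, mul_comm]
  exact hKs

theorem norm_rotatedGradient_sub_le (hs : 0 ≤ s) (hc : 0 ≤ c) (hc1 : c ≤ 1)
    (hDu : LipschitzOnWith K Du U) (hx₁ : x₁ ∈ U) (hx₂ : x₂ ∈ U) :
    ‖rotatedGradient s c Du x₁ - rotatedGradient s c Du x₂‖ ≤ (s + K) * ‖x₁ - x₂‖ := by
  have hLip := hDu.norm_sub_le hx₁ hx₂
  calc ‖rotatedGradient s c Du x₁ - rotatedGradient s c Du x₂‖
      ≤ s * ‖x₁ - x₂‖ + c * ‖Du x₁ - Du x₂‖ := by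
        rw [rotatedGradient_sub]
        refine (norm_add_le _ _).trans_eq ?_
        rw [norm_smul, norm_smul, Real.norm_of_nonneg hs, Real.norm_of_nonneg hc]
    _ ≤ s * ‖x₁ - x₂‖ + 1 * (K * ‖x₁ - x₂‖) := by gcongr
    _ = (s + K) * ‖x₁ - x₂‖ := by ring

theorem norm_rotatedGradient_sub_le_div (hs : 0 ≤ s) (hc1 : c ≤ 1) (hKs : K * s < c)
    (hDu : LipschitzOnWith K Du U) (hx₁ : x₁ ∈ U) (hx₂ : x₂ ∈ U) :
    ‖rotatedGradient s c Du x₁ - rotatedGradient s c Du x₂‖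
      ≤ (s + K) / (c - K * s) * ‖rotatedBase s c Du x₁ - rotatedBase s c Du x₂‖ := by
  have hgap : 0 < c - K * s := sub_pos.2 hKs
  have hc : 0 ≤ c := by nlinarith [K.coe_nonneg]
  calc ‖rotatedGradient s c Du x₁ - rotatedGradient s c Du x₂‖ ≤ (s + K) * ‖x₁ - x₂‖ :=
        norm_rotatedGradient_sub_le hs hc hc1 hDu hx₁ hx₂
    _ = (s + K) / (c - K * s) * ((c - K * s) * ‖x₁ - x₂‖) := by
        rw [← mul_assoc, div_mul_cancel₀ _ hgap.ne']
    _ ≤ _ := mul_le_mul_of_nonneg_left (mul_norm_sub_le_norm_rotatedBase_sub hs hDu hx₁ hx₂)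
        (div_nonneg (by positivity) hgap.le)

theorem rotatedPotential_sub_sub_inner (hsc : s ^ 2 + c ^ 2 = 1) (x x₀ : E) :
    rotatedPotential s c u Du x - rotatedPotential s c u Du x₀
        - ⟪rotatedGradient s c Du x₀, rotatedBase s c Du x - rotatedBase s c Du x₀⟫
      = (u x - u x₀ - ⟪Du x₀, x - x₀⟫)
        + (s * c / 2 * (‖x - x₀‖ ^ 2 - ‖Du x - Du x₀‖ ^ 2) - s ^ 2 * ⟪x - x₀, Du x - Du x₀⟫) := by
  simp only [rotatedPotential, rotatedGradient, rotatedBase, @norm_sub_sq_real, inner_sub_left,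
    inner_sub_right, inner_add_left, real_inner_smul_left, real_inner_smul_right,
    real_inner_self_eq_norm_sq, real_inner_comm (Du x) x, real_inner_comm (Du x₀) x,
    real_inner_comm (Du x₀) x₀, real_inner_comm (Du x₀) (Du x), real_inner_comm x₀ x,
    real_inner_comm (Du x) x₀]
  linear_combination (⟪Du x₀, x₀⟫ - ⟪Du x₀, x⟫) * hsc

theorem isLittleO_rotatedPotential_sub [CompleteSpace E] (hsc : s ^ 2 + c ^ 2 = 1)
    (hDu : LipschitzOnWith K Du U) (hU : U ∈ 𝓝 x₀) (hu : HasGradientAt u (Du x₀) x₀) :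
    (fun x => rotatedPotential s c u Du x - rotatedPotential s c u Du x₀
        - ⟪rotatedGradient s c Du x₀, rotatedBase s c Du x - rotatedBase s c Du x₀⟫)
      =o[𝓝 x₀] fun x => x - x₀ := by
  simp only [rotatedPotential_sub_sub_inner hsc]
  exact (hasGradientAt_iff_isLittleO.1 hu).add
    ((hDu.isBigO_norm_sq_sub_inner hU _ _).trans_isLittleO (isLittleO_pow_sub_sub x₀ one_lt_two))

theorem hasGradientAt_rotatedPotential_comp_invFunOn [CompleteSpace E] (hs : 0 ≤ s)
    (hsc : s ^ 2 + c ^ 2 = 1) (hKs : K * s < c) (hDu : LipschitzOnWith K Du U) (hU : IsOpen U)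
    (hu : ∀ x ∈ U, HasGradientAt u (Du x) x) (hx₀ : x₀ ∈ U) :
    HasGradientAt (rotatedPotential s c u Du ∘ invFunOn (rotatedBase s c Du) U)
      (rotatedGradient s c Du x₀) (rotatedBase s c Du x₀) := by
  have himage : rotatedBase s c Du '' U ∈ 𝓝 (rotatedBase s c Du x₀) :=
    (isOpen_image_rotatedBase hs hKs hDu hU).mem_nhds (mem_image_of_mem _ hx₀)
  refine hasGradientAt_comp_of_isLittleO
    (isLittleO_rotatedPotential_sub hsc hDu (hU.mem_nhds hx₀) (hu x₀ hx₀))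
    (isBigO_invFunOn_sub (sub_pos.2 hKs)
      (fun _ h₁ _ h₂ => mul_norm_sub_le_norm_rotatedBase_sub hs hDu h₁ h₂) hx₀ himage)
    ((injOn_rotatedBase hs hKs hDu).leftInvOn_invFunOn hx₀) ?_
  filter_upwards [himage] with y hy using invFunOn_eq hy

end Rotation

theorem upward_rotation_gradient_graph_general
    (n : ℕ) (R K : ℝ) (hK : 0 < K)
    (u : EuclideanSpace ℝ (Fin n) → ℝ)
    (Du : EuclideanSpace ℝ (Fin n) → EuclideanSpace ℝ (Fin n))
    (hdiff : ∀ x ∈ Metric.ball (0 : EuclideanSpace ℝ (Fin n)) R, HasGradientAt u (Du x) x)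
    (hLip : ∀ x₁ ∈ Metric.ball (0 : EuclideanSpace ℝ (Fin n)) R,
      ∀ x₂ ∈ Metric.ball (0 : EuclideanSpace ℝ (Fin n)) R,
        ‖Du x₁ - Du x₂‖ ≤ K * ‖x₁ - x₂‖)
    (γ : ℝ) (hγ0 : 0 < γ) (hγ1 : γ < π / 2) (hγK : K * Real.tan γ < 1)
    (Φ : EuclideanSpace ℝ (Fin n) → EuclideanSpace ℝ (Fin n))
    (hΦ : ∀ x, Φ x = Real.cos γ • x - Real.sin γ • Du x) :
    Set.InjOn Φ (Metric.ball (0 : EuclideanSpace ℝ (Fin n)) R) ∧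
    IsOpen (Φ '' Metric.ball (0 : EuclideanSpace ℝ (Fin n)) R) ∧
    ∃ ubar : EuclideanSpace ℝ (Fin n) → ℝ,
      (∀ x ∈ Metric.ball (0 : EuclideanSpace ℝ (Fin n)) R,
        ubar (Φ x) = u x - Real.sin γ * Real.cos γ * ((‖Du x‖ ^ 2 - ‖x‖ ^ 2) / 2)
          - Real.sin γ ^ 2 * ⟪x, Du x⟫) ∧
      (∀ x ∈ Metric.ball (0 : EuclideanSpace ℝ (Fin n)) R,
        HasGradientAt ubar (Real.sin γ • x + Real.cos γ • Du x) (Φ x)) ∧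
      (∀ x₁ ∈ Metric.ball (0 : EuclideanSpace ℝ (Fin n)) R,
        ∀ x₂ ∈ Metric.ball (0 : EuclideanSpace ℝ (Fin n)) R,
          ‖(Real.sin γ • x₁ + Real.cos γ • Du x₁) - (Real.sin γ • x₂ + Real.cos γ • Du x₂)‖ ≤
            ((Real.sin γ + K) / (Real.cos γ - K * Real.sin γ)) * ‖Φ x₁ - Φ x₂‖) := by
  lift K to ℝ≥0 using hK.le
  obtain rfl : Φ = rotatedBase (sin γ) (cos γ) Du := funext hΦ
  have hDu : LipschitzOnWith K Du (ball 0 R) := lipschitzOnWith_iff_norm_sub_le.2 hLip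
  have hs : 0 ≤ sin γ := sin_nonneg_of_nonneg_of_le_pi hγ0.le (by linarith [pi_pos])
  have hc : 0 < cos γ := cos_pos_of_mem_Ioo ⟨by linarith [pi_pos], hγ1⟩
  have hKs : K * sin γ < cos γ := by
    rwa [tan_eq_sin_div_cos, ← mul_div_assoc, div_lt_one hc] at hγK
  have hinj := injOn_rotatedBase hs hKs hDu
  refine ⟨hinj, isOpen_image_rotatedBase hs hKs hDu isOpen_ball,
    rotatedPotential (sin γ) (cos γ) u Du ∘ invFunOn (rotatedBase (sin γ) (cos γ) Du) (ball 0 R),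
    fun x hx => congrArg (rotatedPotential _ _ u Du) (hinj.leftInvOn_invFunOn hx),
    fun x hx => hasGradientAt_rotatedPotential_comp_invFunOn hs (sin_sq_add_cos_sq γ) hKs hDu
      isOpen_ball hdiff hx,
    fun x₁ hx₁ x₂ hx₂ => norm_rotatedGradient_sub_le_div hs (cos_le_one γ) hKs hDu hx₁ hx₂⟩

/-- Upward rotation of a `C^{1,1}` gradient graph. If `Du` is the gradient of `u` on `B_R`,
`K`-Lipschitz there, and `γ ∈ (0, π/2)` satisfies `K tan γ < 1`, then with
`Φ(x) = cos γ x - sin γ Du(x)`: (i) `Φ` is injective on `B_R` with open image;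
(ii) there is `ū` on the image with `ū(Φ(x))` given by the rotated potential formula and
gradient `Dū(Φ(x)) = sin γ x + cos γ Du(x)`; (iii) `Dū` is Lipschitz on the image with
constant at most `(sin γ + K)/(cos γ - K sin γ)`. -/
theorem upward_rotation_gradient_graph
    (n : ℕ) (hn : 1 ≤ n) (R K : ℝ) (hR : 0 < R) (hK : 0 < K)
    (u : EuclideanSpace ℝ (Fin n) → ℝ)
    (Du : EuclideanSpace ℝ (Fin n) → EuclideanSpace ℝ (Fin n))
    (hdiff : ∀ x ∈ Metric.ball (0 : EuclideanSpace ℝ (Fin n)) R, HasGradientAt u (Du x) x)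
    (hLip : ∀ x₁ ∈ Metric.ball (0 : EuclideanSpace ℝ (Fin n)) R,
      ∀ x₂ ∈ Metric.ball (0 : EuclideanSpace ℝ (Fin n)) R,
        ‖Du x₁ - Du x₂‖ ≤ K * ‖x₁ - x₂‖)
    (γ : ℝ) (hγ0 : 0 < γ) (hγ1 : γ < π / 2) (hγK : K * Real.tan γ < 1)
    (Φ : EuclideanSpace ℝ (Fin n) → EuclideanSpace ℝ (Fin n))
    (hΦ : ∀ x, Φ x = Real.cos γ • x - Real.sin γ • Du x) :
    Set.InjOn Φ (Metric.ball (0 : EuclideanSpace ℝ (Fin n)) R) ∧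
    IsOpen (Φ '' Metric.ball (0 : EuclideanSpace ℝ (Fin n)) R) ∧
    ∃ ubar : EuclideanSpace ℝ (Fin n) → ℝ,
      (∀ x ∈ Metric.ball (0 : EuclideanSpace ℝ (Fin n)) R,
        ubar (Φ x) = u x - Real.sin γ * Real.cos γ * ((‖Du x‖ ^ 2 - ‖x‖ ^ 2) / 2)
          - Real.sin γ ^ 2 * ⟪x, Du x⟫) ∧
      (∀ x ∈ Metric.ball (0 : EuclideanSpace ℝ (Fin n)) R,
        HasGradientAt ubar (Real.sin γ • x + Real.cos γ • Du x) (Φ x)) ∧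
      (∀ x₁ ∈ Metric.ball (0 : EuclideanSpace ℝ (Fin n)) R,
        ∀ x₂ ∈ Metric.ball (0 : EuclideanSpace ℝ (Fin n)) R,
          ‖(Real.sin γ • x₁ + Real.cos γ • Du x₁) - (Real.sin γ • x₂ + Real.cos γ • Du x₂)‖ ≤
            ((Real.sin γ + K) / (Real.cos γ - K * Real.sin γ)) * ‖Φ x₁ - Φ x₂‖) :=
  upward_rotation_gradient_graph_general n R K hK u Du hdiff hLip γ hγ0 hγ1 hγK Φ hΦ
end
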